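/- Let $d > 0$ and $\gamma > 0$ be fixed. For each $N \geq 3$ define $\mathcal{W}_N = \frac{\log N}{8 \log\log N}$, $w_N = \frac{\gamma \mathcal{W}_N}{2}$, $\mathcal{T}_N = \frac{16(\log\log N)^2}{\gamma \log N}$, $f_N = \frac{d(e^{(w_N-d)\mathcal{T}_N}-1)}{w_N e^{(w_N-d)\mathcal{T}_N}-d}$, and $g_N = \frac{w_N(e^{(w_N-d)\mathcal{T}_N}-1)}{w_N e^{(w_N-d)\mathcal{T}_N}-d}$. Then $\lim_{N \to \infty} (\log N)(1-f_N)(1-g_N) = 1$. -/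

import Mathlib

open Real Filter

noncomputable def llog (N : ℕ) : ℝ := Real.log (Real.log N)
noncomputable def Wc (N : ℕ) : ℝ := Real.log N / (8 * llog N)
noncomputable def Tc (γ : ℝ) (N : ℕ) : ℝ := 16 * (llog N) ^ 2 / (γ * Real.log N)
noncomputable def wc (γ : ℝ) (N : ℕ) : ℝ := γ * Wc N / 2
noncomputable def fc (d γ : ℝ) (N : ℕ) : ℝ :=
  d * (Real.exp ((wc γ N - d) * Tc γ N) - 1) /
    (wc γ N * Real.exp ((wc γ N - d) * Tc γ N) - d)
noncomputable def gc (d γ : ℝ) (N : ℕ) : ℝ :=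
  wc γ N * (Real.exp ((wc γ N - d) * Tc γ N) - 1) /
    (wc γ N * Real.exp ((wc γ N - d) * Tc γ N) - d)

/-!
Write `E = exp ((w - d) T)`. Then `1 - f = E (w - d) / (w E - d)` and `1 - g = (w - d) / (w E - d)`,
and since `exp (w T) = log N` we have `log N = E exp (d T)`, so
`log N (1 - f) (1 - g) = exp (d T) ((1 - d / w) / (1 - d / (w E)))²`.
As `N → ∞`, `T → 0` and `w → ∞`, while `w E ≥ w exp (-d T) → ∞`, so this tends to `1`.
-/

open Topology

theorem one_sub_mul_one_sub_eq {w d E : ℝ} (hw : w ≠ 0) (hE : E ≠ 0) (hwE : w * E - d ≠ 0) :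
    E * ((1 - d * (E - 1) / (w * E - d)) * (1 - w * (E - 1) / (w * E - d))) =
      ((1 - d / w) / (1 - d / (w * E))) ^ 2 := by
  rw [one_sub_div hwE, one_sub_div hwE, one_sub_div hw, one_sub_div (mul_ne_zero hw hE)]
  field_simp
  ring

theorem tendsto_exp_mul_one_sub_mul_one_sub {α : Type*} {l : Filter α} {w T : α → ℝ} (d : ℝ)
    (hw : Tendsto w l atTop) (hT : Tendsto T l (𝓝 0)) (hwT : ∀ᶠ x in l, 0 ≤ w x * T x) :
    Tendsto (fun x => exp (w x * T x) *
      (1 - d * (exp ((w x - d) * T x) - 1) / (w x * exp ((w x - d) * T x) - d)) *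
      (1 - w x * (exp ((w x - d) * T x) - 1) / (w x * exp ((w x - d) * T x) - d)))
      l (𝓝 1) := by
  set E := fun x => exp ((w x - d) * T x)
  have hexp_dT : Tendsto (fun x => exp (d * T x)) l (𝓝 1) := by
    simpa using (hT.const_mul d).rexp
  have hexp_wT : ∀ x, exp (w x * T x) = E x * exp (d * T x) := fun x => by
    simp only [E, ← exp_add]; ring_nf
  have hwE : Tendsto (fun x => w x * E x) l atTop := by
    have hlow : Tendsto (fun x => w x * exp (-(d * T x))) l atTop :=
      hw.atTop_mul_pos one_pos (by simpa [exp_neg] using hexp_dT.inv₀ one_ne_zero)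
    refine tendsto_atTop_mono' l ?_ hlow
    filter_upwards [hwT, hw.eventually_gt_atTop 0] with x hx hwx
    gcongr
    exact exp_le_exp.2 (by linarith [sub_mul (w x) d (T x)])
  have hlim : Tendsto (fun x => exp (d * T x) * ((1 - d / w x) / (1 - d / (w x * E x))) ^ 2)
      l (𝓝 1) := by
    have hu : Tendsto (fun x => 1 - d / w x) l (𝓝 1) := by
      simpa using tendsto_const_nhds.sub (tendsto_const_nhds.div_atTop hw)
    have hv : Tendsto (fun x => 1 - d / (w x * E x)) l (𝓝 1) := by
      simpa using tendsto_const_nhds.sub (tendsto_const_nhds.div_atTop hwE)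
    simpa using hexp_dT.mul ((hu.div hv one_ne_zero).pow 2)
  refine hlim.congr' ?_
  filter_upwards [hw.eventually_gt_atTop 0, hwE.eventually_gt_atTop d] with x hwx hwEx
  rw [hexp_wT, mul_comm (E x), mul_assoc, mul_assoc,
    one_sub_mul_one_sub_eq hwx.ne' (exp_pos _).ne' (sub_pos.2 hwEx).ne']

theorem tendsto_log_natCast_atTop : Tendsto (fun N : ℕ => log N) atTop atTop :=
  tendsto_log_atTop.comp tendsto_natCast_atTop_atTop

theorem tendsto_llog_atTop : Tendsto llog atTop atTop :=
  tendsto_log_atTop.comp tendsto_log_natCast_atTop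

theorem exp_llog_eventually : ∀ᶠ N : ℕ in atTop, exp (llog N) = log N := by
  filter_upwards [tendsto_log_natCast_atTop.eventually_gt_atTop 0] with N hN
  exact exp_log hN

theorem tendsto_wc_atTop {γ : ℝ} (hγ : 0 < γ) : Tendsto (wc γ) atTop atTop := by
  have hexp : Tendsto (fun x : ℝ => γ / 16 * (exp x / x)) atTop atTop := by
    simpa using (tendsto_exp_div_pow_atTop 1).const_mul_atTop (by positivity : 0 < γ / 16)
  refine (hexp.comp tendsto_llog_atTop).congr' ?_
  filter_upwards [exp_llog_eventually] with N hN
  simp only [Function.comp, hN, wc, Wc]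
  ring

theorem tendsto_Tc_nhds_zero (γ : ℝ) : Tendsto (Tc γ) atTop (𝓝 0) := by
  have hexp : Tendsto (fun x : ℝ => 16 / γ * (x ^ 2 * exp (-x))) atTop (𝓝 0) := by
    simpa using (tendsto_pow_mul_exp_neg_atTop_nhds_zero 2).const_mul (16 / γ)
  refine (hexp.comp tendsto_llog_atTop).congr' ?_
  filter_upwards [exp_llog_eventually] with N hN
  simp only [Function.comp, exp_neg, hN, Tc]
  ring

-- Also for the `N` with `log N = 0` or `llog N = 0`: both sides are then `0` by division by zero.
theorem wc_mul_Tc {γ : ℝ} (hγ : γ ≠ 0) (N : ℕ) : wc γ N * Tc γ N = llog N := by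
  unfold wc Wc Tc
  rcases eq_or_ne (llog N) 0 with h | h
  · simp [h]
  rcases eq_or_ne (log N) 0 with hL | hL
  · simp [hL, llog]
  field_simp
  ring

theorem stmt_3_general (d γ : ℝ) (hγ : 0 < γ) :
    Tendsto (fun N : ℕ => Real.log N * (1 - fc d γ N) * (1 - gc d γ N)) atTop (nhds 1) := by
  have hwT : ∀ᶠ N : ℕ in atTop, 0 ≤ wc γ N * Tc γ N := by
    simpa only [wc_mul_Tc hγ.ne'] using tendsto_llog_atTop.eventually_ge_atTop 0
  refine (tendsto_exp_mul_one_sub_mul_one_sub d (tendsto_wc_atTop hγ) (tendsto_Tc_nhds_zero γ)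
    hwT).congr' ?_
  filter_upwards [exp_llog_eventually] with N hN
  rw [wc_mul_Tc hγ.ne', hN]
  rfl

theorem stmt_3 (d γ : ℝ) (hd : 0 < d) (hγ : 0 < γ) :
    Tendsto (fun N : ℕ => Real.log N * (1 - fc d γ N) * (1 - gc d γ N)) atTop (nhds 1) :=
  stmt_3_general d γ hγ
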